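/- In the Kingman limit n → ∞, θ → 0 with nθ = γ > 0 fixed, the distribution P(P_{n,k}=p) = [n!/(n-p)!]·B_{k,p}(θ)/(nθ)_k converges to P(P_k=p) = γ^p s(k,p)/(γ)_k, where s(k,p) is the unsigned Stirling number of the first kind. -/

import Mathlib

open Finset Filter

/-- Rising factorial `(x)_k = x(x+1)⋯(x+k-1)`. -/
noncomputable def rf (x : ℝ) (k : ℕ) : ℝ := ∏ i ∈ Finset.range k, (x + i)

/-- The Bell polynomial `B_{k,p}(θ)` in the variables `x_i = (θ)_i`. -/
noncomputable def BellP (θ : ℝ) (k p : ℕ) : ℝ :=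
  ((k.factorial : ℝ) / (p.factorial : ℝ)) *
    ∑ b ∈ Finset.Nat.antidiagonalTuple p k,
      if ∀ q, 1 ≤ b q then ∏ q, rf θ (b q) / ((b q).factorial : ℝ) else 0

/-- Unsigned Stirling numbers of the first kind. -/
def stirling1 : ℕ → ℕ → ℕ
  | 0, 0 => 1
  | 0, _ + 1 => 0
  | _ + 1, 0 => 0
  | k + 1, p + 1 => k * stirling1 k (p + 1) + stirling1 k p

/-!
Expand `B_{k,p}(θ)` as a sum over compositions `b` of `k` into `p` positive parts and pair the
factor `n - q` of `n!/(n-p)!` with the part `b_q`. Since `(θ)_m = θ (θ+1)_{m-1}` and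
`(1)_{m-1} = (m-1)!`, each pair `(n - q) (γ/n)_{b_q} / b_q!` tends to `γ / b_q`, so the limit is
`γ^p · k!/p! · ∑_b ∏_q 1/b_q`. That sum is the `X^k`-coefficient of `L^p` for
`L = -log (1 - X)`, and `k!/p! [X^k] L^p` satisfies the Stirling recursion because
`(1 - X) L' = 1` gives `(1 - X) (L^(p+1))' = (p + 1) L^p`.
-/

open PowerSeries
open scoped Nat Topology

theorem Finset.Nat.sum_antidiagonalTuple_succ {M : Type*} [AddCommMonoid M] (k n : ℕ)
    (f : (Fin (k + 1) → ℕ) → M) :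
    ∑ x ∈ Nat.antidiagonalTuple (k + 1) n, f x =
      ∑ ni ∈ antidiagonal n, ∑ x ∈ Nat.antidiagonalTuple k ni.2, f (Fin.cons ni.1 x) := by
  have hval : (Nat.antidiagonalTuple (k + 1) n).val =
      (antidiagonal n).val.bind fun ni =>
        (Nat.antidiagonalTuple k ni.2).val.map (Fin.cons ni.1) := by
    change (List.Nat.antidiagonalTuple (k + 1) n : Multiset _) =
      (List.Nat.antidiagonal n : Multiset _).bind fun ni : ℕ × ℕ =>
        (List.Nat.antidiagonalTuple k ni.2 : Multiset (Fin k → ℕ)).map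
          (Fin.cons ni.1 : _ → Fin (k + 1) → ℕ)
    simp only [Multiset.map_coe, Multiset.coe_bind]
    rfl
  simp only [Finset.sum_eq_multiset_sum, hval, Multiset.map_bind, Multiset.sum_bind,
    Multiset.map_map, Function.comp_def]

theorem PowerSeries.coeff_pow_eq_sum_antidiagonalTuple {R : Type*} [CommSemiring R]
    (f : R⟦X⟧) (k n : ℕ) :
    coeff n (f ^ k) = ∑ b ∈ Finset.Nat.antidiagonalTuple k n, ∏ i, coeff (b i) f := by
  induction k generalizing n with
  | zero => cases n <;> simp [coeff_one]
  | succ k ih =>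
    simp only [pow_succ', coeff_mul, ih, mul_sum, Finset.Nat.sum_antidiagonalTuple_succ,
      Fin.prod_univ_succ, Fin.cons_zero, Fin.cons_succ]

theorem PowerSeries.coeff_X_mul_derivative {R : Type*} [CommSemiring R] (f : R⟦X⟧) (n : ℕ) :
    coeff n (X * d⁄dX R f) = n * coeff n f := by
  cases n <;> simp [coeff_succ_X_mul, coeff_derivative, mul_comm]

section NegLogOneSub

variable {K : Type*} [Field K] [CharZero K]

variable (K) in
/-- `-log (1 - X) = ∑ Xᵐ / m`; the constant coefficient is `(0 : K)⁻¹ = 0`. -/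
noncomputable def negLogOneSub : K⟦X⟧ := PowerSeries.mk fun m => (m : K)⁻¹

theorem derivative_negLogOneSub : d⁄dX K (negLogOneSub K) = PowerSeries.mk 1 := by
  ext n
  rw [coeff_derivative, negLogOneSub, coeff_mk, coeff_mk, Nat.cast_add_one,
    inv_mul_cancel₀ (Nat.cast_add_one_ne_zero n), Pi.one_apply]

theorem coeff_negLogOneSub_pow_succ_succ (k p : ℕ) :
    (k + 1) * coeff (k + 1) (negLogOneSub K ^ (p + 1)) =
      k * coeff k (negLogOneSub K ^ (p + 1)) + (p + 1) * coeff k (negLogOneSub K ^ p) := by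
  have hode :
      (1 - X) * d⁄dX K (negLogOneSub K ^ (p + 1)) = (p + 1 : K) • negLogOneSub K ^ p := by
    rw [derivative_pow, derivative_negLogOneSub, Nat.add_sub_cancel, mul_left_comm,
      mul_comm (1 - X), mk_one_mul_one_sub_eq_one, mul_one, ← Nat.cast_add_one,
      Nat.cast_smul_eq_nsmul, nsmul_eq_mul]
  have h := congrArg (coeff k) hode
  rw [sub_mul, one_mul, map_sub, coeff_X_mul_derivative, coeff_derivative, coeff_smul] at h
  linear_combination h

theorem factorial_mul_coeff_negLogOneSub_pow (k p : ℕ) :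
    (k ! : K) * coeff k (negLogOneSub K ^ p) = p ! * stirling1 k p := by
  induction k generalizing p with
  | zero => cases p <;> simp [stirling1, negLogOneSub]
  | succ k ih =>
    cases p with
    | zero => simp [stirling1, coeff_one]
    | succ p =>
      have hrec := coeff_negLogOneSub_pow_succ_succ (K := K) k p
      have h1 := ih (p + 1)
      have h2 := ih p
      simp only [stirling1, Nat.factorial_succ, Nat.cast_mul, Nat.cast_add, Nat.cast_one] at *
      linear_combination (k ! : K) * hrec + k * h1 + (p + 1) * h2

theorem stirling1_eq_sum_antidiagonalTuple (k p : ℕ) :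
    (stirling1 k p : K) =
      k ! / p ! * ∑ b ∈ Finset.Nat.antidiagonalTuple p k, ∏ q, (b q : K)⁻¹ := by
  have hp : (p ! : K) ≠ 0 := Nat.cast_ne_zero.2 p.factorial_ne_zero
  rw [div_mul_eq_mul_div, eq_div_iff hp, mul_comm, ← factorial_mul_coeff_negLogOneSub_pow,
    coeff_pow_eq_sum_antidiagonalTuple]
  simp only [negLogOneSub, coeff_mk]

end NegLogOneSub

theorem cast_factorial_div_factorial_sub {K : Type*} [Field K] [CharZero K] {n p : ℕ}
    (h : p ≤ n) : (n ! : K) / (n - p)! = ∏ q : Fin p, ((n : K) - q) := by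
  rw [div_eq_iff (Nat.cast_ne_zero.2 (Nat.factorial_ne_zero _)),
    ← Nat.factorial_mul_descFactorial h, Nat.cast_mul, mul_comm, Nat.descFactorial_eq_prod_range,
    Nat.cast_prod,     ← Fin.prod_univ_eq_prod_range]
  congr 1
  exact prod_congr rfl fun q _ => Nat.cast_sub (q.is_lt.le.trans h)

theorem rf_succ (x : ℝ) (m : ℕ) : rf x (m + 1) = x * rf (x + 1) m := by
  simp only [rf, prod_range_succ', Nat.cast_add, Nat.cast_one, Nat.cast_zero, add_zero, add_assoc,
    add_comm (1 : ℝ)]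
  ring

theorem rf_one (m : ℕ) : rf 1 m = m ! := by
  rw [rf, ← prod_range_add_one_eq_factorial, Nat.cast_prod]
  simp [add_comm]

theorem continuous_rf (m : ℕ) : Continuous fun x => rf x m := by
  unfold rf; fun_prop

theorem tendsto_sub_mul_rf_div_factorial (γ c : ℝ) {m : ℕ} (hm : m ≠ 0) :
    Tendsto (fun n : ℕ => ((n : ℝ) - c) * rf (γ / n) m / m !) atTop
      (𝓝 (γ * (m : ℝ)⁻¹)) := by
  obtain ⟨m, rfl⟩ := Nat.exists_eq_add_one_of_ne_zero hm
  have hθ : Tendsto (fun n : ℕ => γ / n) atTop (𝓝 0) :=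
    tendsto_const_div_atTop_nhds_zero_nat γ
  have hnθ : Tendsto (fun n : ℕ => ((n : ℝ) - c) * (γ / n)) atTop (𝓝 γ) := by
    have := (tendsto_const_div_atTop_nhds_zero_nat (c * γ)).const_sub γ
    rw [sub_zero] at this
    refine this.congr' ?_
    filter_upwards [eventually_ne_atTop 0] with n hn
    field_simp [show (n : ℝ) ≠ 0 by exact_mod_cast hn]
  have hrf : Tendsto (fun n : ℕ => rf (γ / n + 1) m) atTop (𝓝 (m ! : ℝ)) := by
    rw [← rf_one]
    exact ((continuous_rf m).tendsto 1).comp (by simpa using hθ.add_const 1)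
  have hlim : γ * ((m + 1 : ℕ) : ℝ)⁻¹ = γ * m ! / (m + 1)! := by
    rw [Nat.factorial_succ, Nat.cast_mul]
    field_simp
  rw [hlim]
  simpa only [rf_succ, mul_assoc] using (hnθ.mul hrf).div_const ((m + 1)! : ℝ)

theorem tendsto_factorial_div_mul_bellP_summand (γ : ℝ) {p : ℕ} (b : Fin p → ℕ) :
    Tendsto (fun n : ℕ => (n ! : ℝ) / (n - p)! *
        if ∀ q, 1 ≤ b q then ∏ q, rf (γ / n) (b q) / (b q)! else 0)
      atTop (𝓝 (γ ^ p * ∏ q, (b q : ℝ)⁻¹)) := by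
  by_cases hb : ∀ q, 1 ≤ b q
  · simp only [if_pos hb]
    have := tendsto_finsetProd univ fun (q : Fin p) _ =>
      tendsto_sub_mul_rf_div_factorial γ ((q : ℕ) : ℝ) (Nat.one_le_iff_ne_zero.1 (hb q))
    rw [prod_mul_distrib, prod_const, card_univ, Fintype.card_fin] at this
    refine this.congr' ?_
    filter_upwards [eventually_ge_atTop p] with n hn
    rw [cast_factorial_div_factorial_sub hn, ← prod_mul_distrib]
    exact prod_congr rfl fun q _ => by ring
  · obtain ⟨q, hq⟩ := not_forall.1 hb
    rw [prod_eq_zero (mem_univ q) (by simp [Nat.lt_one_iff.1 (not_le.1 hq)]), mul_zero]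
    simpa only [if_neg hb, mul_zero] using tendsto_const_nhds

theorem kingman_limit_general (γ : ℝ) (k p : ℕ) :
    Tendsto
      (fun n : ℕ =>
        ((n.factorial : ℝ) / ((n - p).factorial : ℝ)) * BellP (γ / n) k p /
          rf γ k)
      atTop (nhds (γ ^ p * (stirling1 k p : ℝ) / rf γ k)) := by
  have hBellP (n : ℕ) : (n ! : ℝ) / (n - p)! * BellP (γ / n) k p =
      k ! / p ! * ∑ b ∈ Finset.Nat.antidiagonalTuple p k, (n ! : ℝ) / (n - p)! *
        if ∀ q, 1 ≤ b q then ∏ q, rf (γ / n) (b q) / (b q)! else 0 := by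
    rw [BellP, ← mul_sum]
    ring
  have hlim : γ ^ p * (stirling1 k p : ℝ) =
      k ! / p ! * ∑ b ∈ Finset.Nat.antidiagonalTuple p k, γ ^ p * ∏ q, (b q : ℝ)⁻¹ := by
    rw [stirling1_eq_sum_antidiagonalTuple, ← mul_sum]
    ring
  simp only [hBellP, hlim]
  exact ((tendsto_finsetSum _ fun b _ =>
    tendsto_factorial_div_mul_bellP_summand γ b).const_mul _).div_const _

/-- Kingman limit: as `n → ∞`, `θ = γ/n → 0` with `nθ = γ` fixed, the law
`P(P_{n,k}=p) = [n!/(n-p)!] B_{k,p}(θ)/(nθ)_k` converges to the Ewens law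
`γ^p s(k,p)/(γ)_k`. -/
theorem kingman_limit (γ : ℝ) (hγ : 0 < γ) (k p : ℕ) (hp : 1 ≤ p) (hpk : p ≤ k) :
    Tendsto
      (fun n : ℕ =>
        ((n.factorial : ℝ) / ((n - p).factorial : ℝ)) * BellP (γ / n) k p /
          rf γ k)
      atTop (nhds (γ ^ p * (stirling1 k p : ℝ) / rf γ k)) :=
  kingman_limit_general γ k p
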